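/- For every nonnegative integer L, the polynomial sum over all integers j of (-1)^j q^{j(5j+3)/2} [2L+1 choose L-2j]_q equals the sum over n >= 0 of q^{n(n+1)} [L choose n]_q; in particular this polynomial has nonnegative coefficients. -/

import Mathlib

open Polynomial Finset

noncomputable def qb : ℕ → ℕ → Polynomial ℤ
  | _, 0 => 1
  | 0, _ + 1 => 0
  | n + 1, m + 1 => qb n m + X ^ (m + 1) * qb n (m + 1)

lemma qb_zero (n : ℕ) : qb n 0 = 1 := by cases n <;> rfl

lemma qb_succ_succ (n m : ℕ) : qb (n+1) (m+1) = qb n m + X ^ (m + 1) * qb n (m + 1) := rfl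

lemma qb_eq_zero_of_lt : ∀ {n m : ℕ}, n < m → qb n m = 0
  | 0, m+1, _ => rfl
  | n+1, m+1, h => by
      rw [qb_succ_succ, qb_eq_zero_of_lt (by omega), qb_eq_zero_of_lt (by omega)]
      ring

lemma qb_self : ∀ n : ℕ, qb n n = 1
  | 0 => rfl
  | n+1 => by
      rw [qb_succ_succ, qb_self n, qb_eq_zero_of_lt (by omega)]
      ring

lemma qb_coeff_nonneg : ∀ (n m : ℕ) (i : ℕ), 0 ≤ (qb n m).coeff i
  | _, 0, i => by rw [qb_zero]; simp [coeff_one]; positivity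
  | 0, m+1, i => by show (0:Polynomial ℤ).coeff i ≥ 0; simp
  | n+1, m+1, i => by
      rw [qb_succ_succ, coeff_add, coeff_X_pow_mul']
      have h1 := qb_coeff_nonneg n m i
      have h2 : (0:ℤ) ≤ if m + 1 ≤ i then (qb n (m+1)).coeff (i - (m+1)) else 0 := by
        split
        · exact qb_coeff_nonneg n (m+1) _
        · exact le_rfl
      exact add_nonneg h1 h2

lemma qb_pascal_sym : ∀ (n m : ℕ), m ≤ n →
    qb (n+1) (m+1) = X ^ (n - m) * qb n m + qb n (m+1)
  | n, m, h => by
      rcases Nat.lt_or_ge m n with hlt | hge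
      · obtain ⟨n', rfl⟩ : ∃ n', n = n' + 1 := ⟨n - 1, by omega⟩
        cases m with
        | zero =>
          have ih := qb_pascal_sym n' 0 (by omega)
          rw [Nat.sub_zero] at ih ⊢
          conv_lhs => rw [qb_succ_succ (n'+1) 0, ih]
          conv_rhs => rw [qb_succ_succ n' 0]
          rw [qb_zero, qb_zero]
          ring
        | succ m' =>
          have h1 : m' ≤ n' := by omega
          have h2 : m' + 1 ≤ n' := by omega
          obtain ⟨k, rfl⟩ : ∃ k, n' = m' + 1 + k := ⟨n' - m' - 1, by omega⟩
          have ih1 := qb_pascal_sym (m' + 1 + k) m' h1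
          have ih2 := qb_pascal_sym (m' + 1 + k) (m' + 1) h2
          rw [show m' + 1 + k - m' = k + 1 by omega] at ih1
          rw [show m' + 1 + k - (m' + 1) = k by omega] at ih2
          rw [show m' + 1 + k + 1 - (m' + 1) = k + 1 by omega]
          conv_lhs => rw [qb_succ_succ (m' + 1 + k + 1) (m' + 1), ih1, ih2]
          conv_rhs => rw [qb_succ_succ (m' + 1 + k) m', qb_succ_succ (m' + 1 + k) (m' + 1)]
          ring
      · have : m = n := by omega
        subst this
        rw [qb_succ_succ, qb_self, qb_eq_zero_of_lt (show m < m + 1 by omega), Nat.sub_self]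
        ring

lemma qb_symm : ∀ (n m : ℕ), m ≤ n → qb n (n - m) = qb n m
  | n, 0, _ => by rw [Nat.sub_zero, qb_self, qb_zero]
  | 0, m+1, h => by omega
  | n+1, m+1, h => by
      rcases Nat.lt_or_ge (m+1) (n+1) with hlt | hge
      · have hm1n : m + 1 ≤ n := by omega
        have hmn : m ≤ n := by omega
        rw [show n + 1 - (m+1) = (n - m - 1) + 1 by omega, qb_succ_succ]
        have e1 : qb n (n - m - 1) = qb n (m + 1) := by
          have := qb_symm n (m+1) hm1n
          rwa [show n - (m+1) = n - m - 1 by omega] at this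
        have e2 : qb n (n - m - 1 + 1) = qb n m := by
          have := qb_symm n m hmn
          rwa [show n - m = n - m - 1 + 1 by omega] at this
        rw [e1, e2, qb_pascal_sym n m hmn, show n - m - 1 + 1 = n - m by omega]
        ring
      · have : m + 1 = n + 1 := by omega
        rw [this, Nat.sub_self, qb_zero]
        exact (qb_self _).symm


/-- The Gaussian binomial coefficient with integer arguments, zero unless `0 ≤ m ≤ n`. -/
noncomputable def qbz (n m : ℤ) : Polynomial ℤ :=
  if 0 ≤ m ∧ m ≤ n then qb n.toNat m.toNat else 0

/-- `B(L,M,a,b) = [L+M+a-b; L+a]_q [L+M-a+b; L-a]_q`. -/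
noncomputable def Bp (L M a b : ℤ) : Polynomial ℤ :=
  qbz (L + M + a - b) (L + a) * qbz (L + M - a + b) (L - a)

lemma qbz_eq_zero {n m : ℤ} (h : ¬(0 ≤ m ∧ m ≤ n)) : qbz n m = 0 := if_neg h

lemma qbz_eq_qb {n m : ℤ} (hn : 0 ≤ n) (hm : 0 ≤ m) : qbz n m = qb n.toNat m.toNat := by
  unfold qbz
  split
  · rfl
  · rw [qb_eq_zero_of_lt (by omega)]

lemma qbz_zero {n : ℤ} (hn : 0 ≤ n) : qbz n 0 = 1 := by
  rw [qbz_eq_qb hn le_rfl]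
  exact qb_zero _

lemma qbz_pascal (n m : ℤ) (hn : 1 ≤ n) :
    qbz n m = qbz (n-1) (m-1) + X ^ m.toNat * qbz (n-1) m := by
  rcases lt_trichotomy m 0 with hm | hm | hm
  · rw [qbz_eq_zero (by omega), qbz_eq_zero (show ¬(0 ≤ m-1 ∧ m-1 ≤ n-1) by omega),
      qbz_eq_zero (show ¬(0 ≤ m ∧ m ≤ n-1) by omega)]
    ring
  · subst hm
    rw [qbz_zero (by omega), qbz_zero (by omega),
      qbz_eq_zero (show ¬((0:ℤ) ≤ 0-1 ∧ (0:ℤ)-1 ≤ n-1) by omega)]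
    simp
  · rw [qbz_eq_qb (by omega) (by omega), qbz_eq_qb (by omega) (by omega),
      qbz_eq_qb (by omega) (by omega)]
    rw [show n.toNat = (n-1).toNat + 1 by omega, show m.toNat = (m-1).toNat + 1 by omega]
    rw [qb_succ_succ]

lemma qbz_pascal_sym (n m : ℤ) (hn : 1 ≤ n) :
    qbz n m = X ^ (n - m).toNat * qbz (n-1) (m-1) + qbz (n-1) m := by
  rcases lt_trichotomy m 0 with hm | hm | hm
  · rw [qbz_eq_zero (by omega), qbz_eq_zero (show ¬(0 ≤ m-1 ∧ m-1 ≤ n-1) by omega),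
      qbz_eq_zero (show ¬(0 ≤ m ∧ m ≤ n-1) by omega)]
    ring
  · subst hm
    rw [qbz_zero (by omega), qbz_zero (by omega),
      qbz_eq_zero (show ¬((0:ℤ) ≤ 0-1 ∧ (0:ℤ)-1 ≤ n-1) by omega)]
    simp
  · rcases le_or_gt m n with hmn | hmn
    · rw [qbz_eq_qb (by omega) (by omega), qbz_eq_qb (by omega) (by omega),
        qbz_eq_qb (by omega) (by omega)]
      rw [show n.toNat = (n-1).toNat + 1 by omega, show m.toNat = (m-1).toNat + 1 by omega]
      rw [qb_pascal_sym (n-1).toNat (m-1).toNat (by omega)]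
      congr 3
      omega
    · rw [qbz_eq_zero (by omega), qbz_eq_zero (show ¬(0 ≤ m-1 ∧ m-1 ≤ n-1) by omega),
        qbz_eq_zero (show ¬(0 ≤ m ∧ m ≤ n-1) by omega)]
      ring

lemma qbz_symm (n m : ℤ) (hn : 0 ≤ n) : qbz n (n - m) = qbz n m := by
  rcases lt_or_ge m 0 with hm | hm
  · rw [qbz_eq_zero (by omega), qbz_eq_zero (show ¬(0 ≤ m ∧ m ≤ n) by omega)]
  · rcases le_or_gt m n with hmn | hmn
    · rw [qbz_eq_qb hn (by omega), qbz_eq_qb hn hm]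
      rw [show (n - m).toNat = n.toNat - m.toNat by omega]
      exact qb_symm n.toNat m.toNat (by omega)
    · rw [qbz_eq_zero (by omega), qbz_eq_zero (by omega)]

noncomputable def E0 (L : ℕ) : Polynomial ℤ := ∑ n ∈ Finset.range (L+1), X ^ (n*n) * qb L n
noncomputable def E1 (L : ℕ) : Polynomial ℤ := ∑ n ∈ Finset.range (L+1), X ^ (n*(n+1)) * qb L n
noncomputable def Gq (L : ℕ) : Polynomial ℤ :=
  ∑ n ∈ Finset.range (L+1), X ^ ((n+1)*(n+1)) * qb L n

lemma E0_succ (L : ℕ) : E0 (L+1) = E0 L + X ^ (L+1) * E1 L := by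
  have step : ∀ m ∈ Finset.range (L+1), X ^ ((m+1)*(m+1)) * qb (L+1) (m+1)
      = X ^ (L+1) * (X ^ (m*(m+1)) * qb L m) + X ^ ((m+1)*(m+1)) * qb L (m+1) := by
    intro m hm
    simp only [Finset.mem_range] at hm
    obtain ⟨d, rfl⟩ : ∃ d, L = m + d := ⟨L - m, by omega⟩
    rw [qb_pascal_sym (m+d) m (by omega), show m + d - m = d by omega, mul_add]
    congr 1
    rw [← mul_assoc, ← pow_add, ← mul_assoc, ← pow_add]
    congr 2
    ring
  calc E0 (L+1)
      = (∑ m ∈ Finset.range (L+1), X ^ ((m+1)*(m+1)) * qb (L+1) (m+1))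
          + X ^ (0*0) * qb (L+1) 0 :=
        Finset.sum_range_succ' (fun n => X ^ (n*n) * qb (L+1) n) (L+1)
    _ = (∑ m ∈ Finset.range (L+1),
          (X ^ (L+1) * (X ^ (m*(m+1)) * qb L m) + X ^ ((m+1)*(m+1)) * qb L (m+1)))
          + X ^ (0*0) * qb (L+1) 0 :=
        congrArg (· + X ^ (0*0) * qb (L+1) 0) (Finset.sum_congr rfl step)
    _ = X ^ (L+1) * E1 L + ((∑ m ∈ Finset.range (L+1), X ^ ((m+1)*(m+1)) * qb L (m+1))
          + X ^ (0*0) * qb L 0) := by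
        rw [Finset.sum_add_distrib, ← Finset.mul_sum, qb_zero, qb_zero]
        unfold E1
        ring
    _ = X ^ (L+1) * E1 L + ∑ n ∈ Finset.range (L+2), X ^ (n*n) * qb L n := by
        rw [← Finset.sum_range_succ' (fun n => X ^ (n*n) * qb L n) (L+1)]
    _ = E0 L + X ^ (L+1) * E1 L := by
        rw [Finset.sum_range_succ, qb_eq_zero_of_lt (by omega)]
        unfold E0
        ring

lemma E0_succ' (L : ℕ) : E0 (L+1) = Gq L + E1 L := by
  have step : ∀ m ∈ Finset.range (L+1), X ^ ((m+1)*(m+1)) * qb (L+1) (m+1)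
      = X ^ ((m+1)*(m+1)) * qb L m + X ^ ((m+1)*(m+1+1)) * qb L (m+1) := by
    intro m hm
    rw [qb_succ_succ, mul_add]
    congr 1
    rw [← mul_assoc, ← pow_add]
    congr 2
  calc E0 (L+1)
      = (∑ m ∈ Finset.range (L+1), X ^ ((m+1)*(m+1)) * qb (L+1) (m+1))
          + X ^ (0*0) * qb (L+1) 0 :=
        Finset.sum_range_succ' (fun n => X ^ (n*n) * qb (L+1) n) (L+1)
    _ = (∑ m ∈ Finset.range (L+1),
          (X ^ ((m+1)*(m+1)) * qb L m + X ^ ((m+1)*(m+1+1)) * qb L (m+1)))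
          + X ^ (0*0) * qb (L+1) 0 :=
        congrArg (· + X ^ (0*0) * qb (L+1) 0) (Finset.sum_congr rfl step)
    _ = Gq L + ((∑ m ∈ Finset.range (L+1), X ^ ((m+1)*(m+1+1)) * qb L (m+1))
          + X ^ (0*(0+1)) * qb L 0) := by
        rw [Finset.sum_add_distrib, qb_zero, qb_zero]
        unfold Gq
        ring
    _ = Gq L + ∑ n ∈ Finset.range (L+2), X ^ (n*(n+1)) * qb L n := by
        rw [← Finset.sum_range_succ' (fun n => X ^ (n*(n+1)) * qb L n) (L+1)]
    _ = Gq L + E1 L := by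
        rw [Finset.sum_range_succ, qb_eq_zero_of_lt (by omega)]
        unfold E1
        ring

lemma E1_succ (L : ℕ) : E1 (L+1) = E1 L + X ^ (L+1) * Gq L := by
  have step : ∀ m ∈ Finset.range (L+1), X ^ ((m+1)*(m+1+1)) * qb (L+1) (m+1)
      = X ^ (L+1) * (X ^ ((m+1)*(m+1)) * qb L m) + X ^ ((m+1)*(m+1+1)) * qb L (m+1) := by
    intro m hm
    simp only [Finset.mem_range] at hm
    obtain ⟨d, rfl⟩ : ∃ d, L = m + d := ⟨L - m, by omega⟩
    rw [qb_pascal_sym (m+d) m (by omega), show m + d - m = d by omega, mul_add]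
    congr 1
    rw [← mul_assoc, ← pow_add, ← mul_assoc, ← pow_add]
    congr 2
    ring
  calc E1 (L+1)
      = (∑ m ∈ Finset.range (L+1), X ^ ((m+1)*(m+1+1)) * qb (L+1) (m+1))
          + X ^ (0*(0+1)) * qb (L+1) 0 :=
        Finset.sum_range_succ' (fun n => X ^ (n*(n+1)) * qb (L+1) n) (L+1)
    _ = (∑ m ∈ Finset.range (L+1),
          (X ^ (L+1) * (X ^ ((m+1)*(m+1)) * qb L m) + X ^ ((m+1)*(m+1+1)) * qb L (m+1)))
          + X ^ (0*(0+1)) * qb (L+1) 0 :=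
        congrArg (· + X ^ (0*(0+1)) * qb (L+1) 0) (Finset.sum_congr rfl step)
    _ = X ^ (L+1) * Gq L + ((∑ m ∈ Finset.range (L+1), X ^ ((m+1)*(m+1+1)) * qb L (m+1))
          + X ^ (0*(0+1)) * qb L 0) := by
        rw [Finset.sum_add_distrib, ← Finset.mul_sum, qb_zero, qb_zero]
        unfold Gq
        ring
    _ = X ^ (L+1) * Gq L + ∑ n ∈ Finset.range (L+2), X ^ (n*(n+1)) * qb L n := by
        rw [← Finset.sum_range_succ' (fun n => X ^ (n*(n+1)) * qb L n) (L+1)]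
    _ = E1 L + X ^ (L+1) * Gq L := by
        rw [Finset.sum_range_succ, qb_eq_zero_of_lt (by omega)]
        unfold E1
        ring

noncomputable def tm (a b nn d : ℤ) (j : ℤ) : Polynomial ℤ :=
  (-1) ^ j.natAbs * X ^ ((5*j^2 + a*j + b)/2).toNat * qbz nn (d - 2*j)

noncomputable def Sm (a b nn d : ℤ) (s : Finset ℤ) : Polynomial ℤ := ∑ j ∈ s, tm a b nn d j

lemma tm_eq_zero {a b nn d j : ℤ} (h : ¬(0 ≤ d - 2*j ∧ d - 2*j ≤ nn)) : tm a b nn d j = 0 := by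
  unfold tm
  rw [qbz_eq_zero h, mul_zero]

lemma Sm_window (a b nn d : ℤ) {s t : Finset ℤ} (hst : s ⊆ t)
    (h : ∀ j, j ∈ t → j ∉ s → ¬(0 ≤ d - 2*j ∧ d - 2*j ≤ nn)) :
    Sm a b nn d t = Sm a b nn d s :=
  (Finset.sum_subset hst fun j hj hjs => tm_eq_zero (h j hj hjs)).symm

lemma sum_reflect (f : ℤ → Polynomial ℤ) (c : ℤ) :
    ∑ j ∈ Finset.Icc (-c-1) c, f j = ∑ j ∈ Finset.Icc (-c-1) c, f (-1-j) := by
  refine Finset.sum_nbij' (fun j => -1-j) (fun j => -1-j) ?_ ?_ ?_ ?_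
    (fun a ha => by rw [show (-1 : ℤ) - (-1-a) = a by ring]) <;>
    intro a ha <;> simp only [Finset.mem_Icc] at * <;> omega

lemma sum_negate (f : ℤ → Polynomial ℤ) (c : ℤ) :
    ∑ j ∈ Finset.Icc (-c) c, f j = ∑ j ∈ Finset.Icc (-c) c, f (-j) := by
  refine Finset.sum_nbij' (fun j => -j) (fun j => -j) ?_ ?_ ?_ ?_
    (fun a ha => by rw [neg_neg]) <;>
    intro a ha <;> simp only [Finset.mem_Icc] at * <;> omega

lemma sg_reflect (j : ℤ) : ((-1 : Polynomial ℤ)) ^ (-1-j).natAbs = -((-1) ^ j.natAbs) := by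
  rcases Int.even_or_odd j with h | h
  · have h2 : Odd (-1-j) := by
      rw [Int.odd_iff]; rw [Int.even_iff] at h; omega
    rw [(Int.natAbs_odd.mpr h2).neg_one_pow, (Int.natAbs_even.mpr h).neg_one_pow]
  · have h2 : Even (-1-j) := by
      rw [Int.even_iff]; rw [Int.odd_iff] at h; omega
    rw [(Int.natAbs_even.mpr h2).neg_one_pow, (Int.natAbs_odd.mpr h).neg_one_pow]
    norm_num

lemma Sm_extract (a b c nn d : ℤ) (s : Finset ℤ) (hc : 0 ≤ c)
    (hb : ∀ j : ℤ, 0 ≤ 5*j^2 + a*j + b) :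
    Sm a (b + 2*c) nn d s = X ^ c.toNat * Sm a b nn d s := by
  unfold Sm
  rw [Finset.mul_sum]
  refine Finset.sum_congr rfl fun j hj => ?_
  unfold tm
  have he := hb j
  have h2 : ((5*j^2 + a*j + (b + 2*c))/2).toNat = c.toNat + ((5*j^2 + a*j + b)/2).toNat := by
    have : 5*j^2 + a*j + (b + 2*c) = (5*j^2 + a*j + b) + 2*c := by ring
    rw [this]
    generalize 5*j^2 + a*j + b = e at *
    omega
  rw [h2, pow_add]
  ring

lemma tm_pascal (a b nn d : ℤ) (hn : 1 ≤ nn) (hb : ∀ j : ℤ, 0 ≤ 5*j^2 + a*j + b) (j : ℤ) :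
    tm a b nn d j = tm a b (nn-1) (d-1) j + tm (a-4) (b + 2*d) (nn-1) d j := by
  unfold tm
  rw [qbz_pascal nn (d - 2*j) hn, show d - 2*j - 1 = (d-1) - 2*j by ring]
  by_cases h : 0 ≤ d - 2*j
  · have he := hb j
    have h2 : ((5*j^2 + (a-4)*j + (b + 2*d))/2).toNat
        = ((5*j^2 + a*j + b)/2).toNat + (d - 2*j).toNat := by
      have : 5*j^2 + (a-4)*j + (b + 2*d) = (5*j^2 + a*j + b) + 2*(d - 2*j) := by ring
      rw [this]
      generalize 5*j^2 + a*j + b = e at *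
      omega
    rw [h2, pow_add]
    ring
  · rw [qbz_eq_zero (show ¬(0 ≤ d - 2*j ∧ d - 2*j ≤ nn - 1) by omega)]
    ring

lemma tm_pascal_sym (a b nn d : ℤ) (hn : 1 ≤ nn) (hb : ∀ j : ℤ, 0 ≤ 5*j^2 + a*j + b) (j : ℤ) :
    tm a b nn d j = tm (a+4) (b + 2*(nn - d)) (nn-1) (d-1) j + tm a b (nn-1) d j := by
  unfold tm
  rw [qbz_pascal_sym nn (d - 2*j) hn, show d - 2*j - 1 = (d-1) - 2*j by ring]
  by_cases h : d - 2*j ≤ nn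
  · have he := hb j
    have h2 : ((5*j^2 + (a+4)*j + (b + 2*(nn - d)))/2).toNat
        = ((5*j^2 + a*j + b)/2).toNat + (nn - (d - 2*j)).toNat := by
      have : 5*j^2 + (a+4)*j + (b + 2*(nn - d)) = (5*j^2 + a*j + b) + 2*(nn - (d - 2*j)) := by
        ring
      rw [this]
      generalize 5*j^2 + a*j + b = e at *
      omega
    rw [h2, pow_add]
    ring
  · rw [qbz_eq_zero (show ¬(0 ≤ (d-1) - 2*j ∧ (d-1) - 2*j ≤ nn - 1) by omega)]
    ring

lemma Sm_negate (a b nn d c : ℤ) (hnn : 0 ≤ nn) :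
    Sm a b nn d (Finset.Icc (-c) c) = Sm (-a) b nn (nn - d) (Finset.Icc (-c) c) := by
  unfold Sm
  rw [sum_negate (tm a b nn d) c]
  refine Finset.sum_congr rfl fun j hj => ?_
  unfold tm
  rw [show 5*(-j)^2 + a*(-j) + b = 5*j^2 + (-a)*j + b by ring, Int.natAbs_neg,
    show d - 2*(-j) = nn - ((nn - d) - 2*j) by ring, qbz_symm nn ((nn - d) - 2*j) hnn]

lemma Sm_reflect (a b nn d c : ℤ) (hnn : 0 ≤ nn) :
    Sm a b nn d (Finset.Icc (-c-1) c)
      = - Sm (10-a) (5-a+b) nn (nn-d-2) (Finset.Icc (-c-1) c) := by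
  unfold Sm
  rw [sum_reflect (tm a b nn d) c, ← Finset.sum_neg_distrib]
  refine Finset.sum_congr rfl fun j hj => ?_
  unfold tm
  rw [show 5*(-1-j)^2 + a*(-1-j) + b = 5*j^2 + (10-a)*j + (5-a+b) by ring, sg_reflect,
    show d - 2*(-1-j) = nn - ((nn-d-2) - 2*j) by ring, qbz_symm nn ((nn-d-2) - 2*j) hnn]
  ring

lemma quad0 {a : ℤ} (ha : -5 ≤ a) (ha' : a ≤ 5) : ∀ j : ℤ, 0 ≤ 5*j^2 + a*j + 0 := by
  intro j
  rcases le_or_gt j (-1) with hj | hj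
  · nlinarith [mul_nonneg (by linarith : (0:ℤ) ≤ -j) (by linarith : (0:ℤ) ≤ -(5*j+a))]
  · rcases le_or_gt 1 j with hj2 | hj2
    · nlinarith [mul_nonneg (by linarith : (0:ℤ) ≤ j) (by linarith : (0:ℤ) ≤ 5*j+a)]
    · have : j = 0 := by omega
      simp [this]

lemma quad72 : ∀ j : ℤ, 0 ≤ 5*j^2 + 7*j + 2 := by
  intro j
  rcases le_or_gt j (-1) with hj | hj
  · nlinarith [mul_nonneg (by linarith : (0:ℤ) ≤ -(5*j+2)) (by linarith : (0:ℤ) ≤ -(j+1))]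
  · nlinarith [mul_nonneg (by linarith : (0:ℤ) ≤ 5*j+2) (by linarith : (0:ℤ) ≤ j+1)]

noncomputable def w1 (M : ℕ) : Finset ℤ := Finset.Icc (-((M:ℤ)+1)-1) ((M:ℤ)+1)
noncomputable def w2 (M : ℕ) : Finset ℤ := Finset.Icc (-((M:ℤ)+2)) ((M:ℤ)+2)

noncomputable def A0 (M : ℕ) : Polynomial ℤ := Sm 1 0 (2*(M:ℤ)) (M:ℤ) (w2 M)
noncomputable def A1 (M : ℕ) : Polynomial ℤ := Sm 3 0 (2*(M:ℤ)+1) (M:ℤ) (w2 M)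

lemma A0_zero : A0 0 = 1 := by
  unfold A0 w2
  have hsub : ({0} : Finset ℤ) ⊆ Finset.Icc (-(((0:ℕ):ℤ)+2)) (((0:ℕ):ℤ)+2) := by
    intro x hx
    simp only [Finset.mem_singleton] at hx
    subst hx
    simp [Finset.mem_Icc]
  have hvan : ∀ j, j ∈ Finset.Icc (-(((0:ℕ):ℤ)+2)) (((0:ℕ):ℤ)+2) → j ∉ ({0} : Finset ℤ) →
      ¬(0 ≤ ((0:ℕ):ℤ) - 2*j ∧ ((0:ℕ):ℤ) - 2*j ≤ 2*((0:ℕ):ℤ)) := by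
    intro j _ hj
    simp only [Finset.mem_singleton] at hj
    push_cast
    omega
  rw [Sm_window 1 0 (2*((0:ℕ):ℤ)) ((0:ℕ):ℤ) hsub hvan]
  unfold Sm
  rw [Finset.sum_singleton]
  unfold tm
  norm_num [qbz_zero]

lemma A1_zero : A1 0 = 1 := by
  unfold A1 w2
  have hsub : ({0} : Finset ℤ) ⊆ Finset.Icc (-(((0:ℕ):ℤ)+2)) (((0:ℕ):ℤ)+2) := by
    intro x hx
    simp only [Finset.mem_singleton] at hx
    subst hx
    simp [Finset.mem_Icc]
  have hvan : ∀ j, j ∈ Finset.Icc (-(((0:ℕ):ℤ)+2)) (((0:ℕ):ℤ)+2) → j ∉ ({0} : Finset ℤ) →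
      ¬(0 ≤ ((0:ℕ):ℤ) - 2*j ∧ ((0:ℕ):ℤ) - 2*j ≤ 2*((0:ℕ):ℤ)+1) := by
    intro j _ hj
    simp only [Finset.mem_singleton] at hj
    push_cast
    omega
  rw [Sm_window 3 0 (2*((0:ℕ):ℤ)+1) ((0:ℕ):ℤ) hsub hvan]
  unfold Sm
  rw [Finset.sum_singleton]
  unfold tm
  norm_num [qbz_zero]

lemma w2_subset_succ (M : ℕ) : w2 M ⊆ w2 (M+1) := by
  intro x
  unfold w2
  simp only [Finset.mem_Icc]
  push_cast
  omega

lemma A0_succ_w2 (M : ℕ) : A0 (M+1) = Sm 1 0 (2*(M:ℤ)+2) ((M:ℤ)+1) (w2 M) := by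
  unfold A0
  rw [show (((M+1:ℕ)):ℤ) = (M:ℤ)+1 by push_cast; ring,
    show 2*((M:ℤ)+1) = 2*(M:ℤ)+2 by ring]
  refine Sm_window 1 0 (2*(M:ℤ)+2) ((M:ℤ)+1) (w2_subset_succ M) ?_
  intro j hj hj2
  unfold w2 at hj hj2
  simp only [Finset.mem_Icc] at hj hj2
  push_cast at hj hj2 ⊢
  omega

lemma AR1 (M : ℕ) : A0 (M+1) = A0 M + X^(M+1) * A1 M := by
  have hb1 : ∀ j : ℤ, 0 ≤ 5*j^2 + 1*j + 0 := quad0 (by norm_num) (by norm_num)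
  have hbm3 : ∀ j : ℤ, 0 ≤ 5*j^2 + (-3)*j + 0 := quad0 (by norm_num) (by norm_num)
  have hb5 : ∀ j : ℤ, 0 ≤ 5*j^2 + 5*j + 0 := quad0 (by norm_num) (by norm_num)
  have stepA : A0 (M+1) = Sm 1 0 (2*(M:ℤ)+2) ((M:ℤ)+1) (w2 M) := A0_succ_w2 M
  have hpas : ∀ j : ℤ, tm 1 0 (2*(M:ℤ)+2) ((M:ℤ)+1) j
      = tm 1 0 (2*(M:ℤ)+1) (M:ℤ) j + tm (-3) (0 + 2*((M:ℤ)+1)) (2*(M:ℤ)+1) ((M:ℤ)+1) j := by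
    intro j
    have h := tm_pascal 1 0 (2*(M:ℤ)+2) ((M:ℤ)+1) (by omega) hb1 j
    rw [show (2*(M:ℤ)+2)-1 = 2*(M:ℤ)+1 by ring, show ((M:ℤ)+1)-1 = (M:ℤ) by ring,
      show (1:ℤ)-4 = -3 by norm_num] at h
    exact h
  have stepB : Sm 1 0 (2*(M:ℤ)+2) ((M:ℤ)+1) (w2 M)
      = Sm 1 0 (2*(M:ℤ)+1) (M:ℤ) (w2 M)
        + Sm (-3) (0 + 2*((M:ℤ)+1)) (2*(M:ℤ)+1) ((M:ℤ)+1) (w2 M) := by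
    unfold Sm
    rw [← Finset.sum_add_distrib]
    exact Finset.sum_congr rfl fun j _ => hpas j
  have hsecond : Sm (-3) (0 + 2*((M:ℤ)+1)) (2*(M:ℤ)+1) ((M:ℤ)+1) (w2 M) = X^(M+1) * A1 M := by
    rw [Sm_extract (-3) 0 ((M:ℤ)+1) (2*(M:ℤ)+1) ((M:ℤ)+1) (w2 M) (by omega) hbm3,
      show ((M:ℤ)+1).toNat = M+1 by omega]
    congr 1
    unfold w2
    rw [Sm_negate (-3) 0 (2*(M:ℤ)+1) ((M:ℤ)+1) ((M:ℤ)+2) (by omega),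
      show -(-3:ℤ) = 3 by norm_num, show (2*(M:ℤ)+1)-((M:ℤ)+1) = (M:ℤ) by ring]
    rfl
  have hpas2 : ∀ j : ℤ, tm 1 0 (2*(M:ℤ)+1) (M:ℤ) j
      = tm 5 (0 + 2*((M:ℤ)+1)) (2*(M:ℤ)) ((M:ℤ)-1) j + tm 1 0 (2*(M:ℤ)) (M:ℤ) j := by
    intro j
    have h := tm_pascal_sym 1 0 (2*(M:ℤ)+1) (M:ℤ) (by omega) hb1 j
    rw [show (2*(M:ℤ)+1)-1 = 2*(M:ℤ) by ring, show (1:ℤ)+4 = 5 by norm_num,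
      show (2*(M:ℤ)+1)-(M:ℤ) = (M:ℤ)+1 by ring] at h
    exact h
  have hT : Sm 5 0 (2*(M:ℤ)) ((M:ℤ)-1) (w1 M) = 0 := by
    have h := Sm_reflect 5 0 (2*(M:ℤ)) ((M:ℤ)-1) ((M:ℤ)+1) (by omega)
    rw [show (10:ℤ)-5 = 5 by norm_num, show (5:ℤ)-5+0 = 0 by norm_num,
      show 2*(M:ℤ)-((M:ℤ)-1)-2 = (M:ℤ)-1 by ring] at h
    unfold w1
    set T := Sm 5 0 (2*(M:ℤ)) ((M:ℤ)-1) (Finset.Icc (-((M:ℤ)+1)-1) ((M:ℤ)+1)) with hT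
    have h2 : (2 : Polynomial ℤ) * T = 0 := by linear_combination h
    rcases mul_eq_zero.mp h2 with h3 | h3
    · exact absurd h3 two_ne_zero
    · exact h3
  have hfirst : Sm 1 0 (2*(M:ℤ)+1) (M:ℤ) (w2 M) = A0 M := by
    have split : Sm 1 0 (2*(M:ℤ)+1) (M:ℤ) (w2 M)
        = Sm 5 (0 + 2*((M:ℤ)+1)) (2*(M:ℤ)) ((M:ℤ)-1) (w2 M)
          + Sm 1 0 (2*(M:ℤ)) (M:ℤ) (w2 M) := by
      unfold Sm
      rw [← Finset.sum_add_distrib]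
      exact Finset.sum_congr rfl fun j _ => hpas2 j
    have hwin : Sm 5 0 (2*(M:ℤ)) ((M:ℤ)-1) (w2 M) = Sm 5 0 (2*(M:ℤ)) ((M:ℤ)-1) (w1 M) := by
      refine Sm_window 5 0 (2*(M:ℤ)) ((M:ℤ)-1) ?_ ?_
      · intro x
        unfold w1 w2
        simp only [Finset.mem_Icc]
        omega
      · intro j hj hj2
        unfold w2 at hj
        unfold w1 at hj2
        simp only [Finset.mem_Icc] at hj hj2
        omega
    rw [split, Sm_extract 5 0 ((M:ℤ)+1) (2*(M:ℤ)) ((M:ℤ)-1) (w2 M) (by omega) hb5,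
      hwin, hT]
    unfold A0
    ring
  rw [stepA, stepB, hsecond, hfirst]

lemma AR2 (M : ℕ) : A1 (M+1) = A1 M + X^(M+1) * (A0 (M+1) - A1 M) := by
  have hb3 : ∀ j : ℤ, 0 ≤ 5*j^2 + 3*j + 0 := quad0 (by norm_num) (by norm_num)
  have hbm1 : ∀ j : ℤ, 0 ≤ 5*j^2 + (-1)*j + 0 := quad0 (by norm_num) (by norm_num)
  have hb72 : ∀ j : ℤ, 0 ≤ 5*j^2 + 7*j + 2 := quad72
  have stepA : A1 (M+1) = Sm 3 0 (2*(M:ℤ)+3) ((M:ℤ)+1) (w2 M) := by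
    unfold A1
    rw [show (((M+1:ℕ)):ℤ) = (M:ℤ)+1 by push_cast; ring,
      show 2*((M:ℤ)+1)+1 = 2*(M:ℤ)+3 by ring]
    refine Sm_window 3 0 (2*(M:ℤ)+3) ((M:ℤ)+1) (w2_subset_succ M) ?_
    intro j hj hj2
    unfold w2 at hj hj2
    simp only [Finset.mem_Icc] at hj hj2
    push_cast at hj hj2 ⊢
    omega
  have hpas : ∀ j : ℤ, tm 3 0 (2*(M:ℤ)+3) ((M:ℤ)+1) j
      = tm 3 0 (2*(M:ℤ)+2) (M:ℤ) j + tm (-1) (0 + 2*((M:ℤ)+1)) (2*(M:ℤ)+2) ((M:ℤ)+1) j := by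
    intro j
    have h := tm_pascal 3 0 (2*(M:ℤ)+3) ((M:ℤ)+1) (by omega) hb3 j
    rw [show (2*(M:ℤ)+3)-1 = 2*(M:ℤ)+2 by ring, show ((M:ℤ)+1)-1 = (M:ℤ) by ring,
      show (3:ℤ)-4 = -1 by norm_num] at h
    exact h
  have stepB : Sm 3 0 (2*(M:ℤ)+3) ((M:ℤ)+1) (w2 M)
      = Sm 3 0 (2*(M:ℤ)+2) (M:ℤ) (w2 M)
        + Sm (-1) (0 + 2*((M:ℤ)+1)) (2*(M:ℤ)+2) ((M:ℤ)+1) (w2 M) := by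
    unfold Sm
    rw [← Finset.sum_add_distrib]
    exact Finset.sum_congr rfl fun j _ => hpas j
  have hsecond : Sm (-1) (0 + 2*((M:ℤ)+1)) (2*(M:ℤ)+2) ((M:ℤ)+1) (w2 M)
      = X^(M+1) * A0 (M+1) := by
    rw [Sm_extract (-1) 0 ((M:ℤ)+1) (2*(M:ℤ)+2) ((M:ℤ)+1) (w2 M) (by omega) hbm1,
      show ((M:ℤ)+1).toNat = M+1 by omega]
    refine congrArg (X^(M+1) * ·) ?_
    unfold w2
    rw [Sm_negate (-1) 0 (2*(M:ℤ)+2) ((M:ℤ)+1) ((M:ℤ)+2) (by omega),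
      show -(-1:ℤ) = 1 by norm_num, show (2*(M:ℤ)+2)-((M:ℤ)+1) = (M:ℤ)+1 by ring]
    rw [A0_succ_w2 M]
    rfl
  have hpas2 : ∀ j : ℤ, tm 3 0 (2*(M:ℤ)+2) (M:ℤ) j
      = tm 7 (2 + 2*((M:ℤ)+1)) (2*(M:ℤ)+1) ((M:ℤ)-1) j + tm 3 0 (2*(M:ℤ)+1) (M:ℤ) j := by
    intro j
    have h := tm_pascal_sym 3 0 (2*(M:ℤ)+2) (M:ℤ) (by omega) hb3 j
    rw [show (2*(M:ℤ)+2)-1 = 2*(M:ℤ)+1 by ring, show (3:ℤ)+4 = 7 by norm_num,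
      show (0:ℤ) + 2*((2*(M:ℤ)+2)-(M:ℤ)) = 2 + 2*((M:ℤ)+1) by ring] at h
    exact h
  have hA1w1 : Sm 3 0 (2*(M:ℤ)+1) (M:ℤ) (w1 M) = A1 M := by
    unfold A1
    refine (Sm_window 3 0 (2*(M:ℤ)+1) (M:ℤ) ?_ ?_).symm
    · intro x
      unfold w1 w2
      simp only [Finset.mem_Icc]
      omega
    · intro j hj hj2
      unfold w2 at hj
      unfold w1 at hj2
      simp only [Finset.mem_Icc] at hj hj2
      omega
  have hW : Sm 7 2 (2*(M:ℤ)+1) ((M:ℤ)-1) (w1 M) = - A1 M := by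
    have h := Sm_reflect 7 2 (2*(M:ℤ)+1) ((M:ℤ)-1) ((M:ℤ)+1) (by omega)
    rw [show (10:ℤ)-7 = 3 by norm_num, show (5:ℤ)-7+2 = 0 by norm_num,
      show (2*(M:ℤ)+1)-((M:ℤ)-1)-2 = (M:ℤ) by ring] at h
    unfold w1
    rw [h]
    unfold w1 at hA1w1
    rw [hA1w1]
  have hfirst : Sm 3 0 (2*(M:ℤ)+2) (M:ℤ) (w2 M) = A1 M - X^(M+1) * A1 M := by
    have split : Sm 3 0 (2*(M:ℤ)+2) (M:ℤ) (w2 M)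
        = Sm 7 (2 + 2*((M:ℤ)+1)) (2*(M:ℤ)+1) ((M:ℤ)-1) (w2 M)
          + Sm 3 0 (2*(M:ℤ)+1) (M:ℤ) (w2 M) := by
      unfold Sm
      rw [← Finset.sum_add_distrib]
      exact Finset.sum_congr rfl fun j _ => hpas2 j
    have hwin : Sm 7 2 (2*(M:ℤ)+1) ((M:ℤ)-1) (w2 M) = Sm 7 2 (2*(M:ℤ)+1) ((M:ℤ)-1) (w1 M) := by
      refine Sm_window 7 2 (2*(M:ℤ)+1) ((M:ℤ)-1) ?_ ?_
      · intro x
        unfold w1 w2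
        simp only [Finset.mem_Icc]
        omega
      · intro j hj hj2
        unfold w2 at hj
        unfold w1 at hj2
        simp only [Finset.mem_Icc] at hj hj2
        omega
    rw [split, Sm_extract 7 2 ((M:ℤ)+1) (2*(M:ℤ)+1) ((M:ℤ)-1) (w2 M) (by omega) hb72,
      hwin, hW, show ((M:ℤ)+1).toNat = M+1 by omega]
    unfold A1
    ring
  rw [stepA, stepB, hsecond, hfirst]
  ring

lemma E0_zero : E0 0 = 1 := by
  unfold E0
  rw [Finset.sum_range_one, qb_zero]
  ring

lemma E1_zero : E1 0 = 1 := by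
  unfold E1
  rw [Finset.sum_range_one, qb_zero]
  ring

lemma main_eq : ∀ L : ℕ, A0 L = E0 L ∧ A1 L = E1 L := by
  intro L
  induction L with
  | zero => exact ⟨A0_zero.trans E0_zero.symm, A1_zero.trans E1_zero.symm⟩
  | succ M ih =>
    have h0 : A0 (M+1) = E0 (M+1) := by
      rw [AR1, ih.1, ih.2, E0_succ]
    refine ⟨h0, ?_⟩
    rw [AR2, h0, ih.2, E1_succ, E0_succ']
    ring

theorem stmt4 (L : ℕ) :
    (∑ᶠ j : ℤ, (-1 : Polynomial ℤ) ^ j.natAbs * X ^ (j * (5 * j + 3) / 2).toNat *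
        qbz (2 * (L : ℤ) + 1) ((L : ℤ) - 2 * j))
      = (∑ᶠ n : ℕ, X ^ (n * (n + 1)) * qb L n) ∧
    ∀ i : ℕ, 0 ≤ (∑ᶠ j : ℤ, (-1 : Polynomial ℤ) ^ j.natAbs * X ^ (j * (5 * j + 3) / 2).toNat *
        qbz (2 * (L : ℤ) + 1) ((L : ℤ) - 2 * j)).coeff i := by
  have hLHS : (∑ᶠ j : ℤ, (-1 : Polynomial ℤ) ^ j.natAbs * X ^ (j * (5 * j + 3) / 2).toNat *
      qbz (2 * (L : ℤ) + 1) ((L : ℤ) - 2 * j)) = A1 L := by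
    rw [finsum_eq_sum_of_support_subset _ (s := w2 L) ?_]
    · unfold A1 Sm
      refine Finset.sum_congr rfl fun j _ => ?_
      unfold tm
      rw [show j * (5 * j + 3) = 5*j^2 + 3*j + 0 by ring]
    · intro j hj
      simp only [Function.mem_support] at hj
      by_contra hjw
      apply hj
      rw [qbz_eq_zero ?_, mul_zero]
      unfold w2 at hjw
      simp only [Finset.coe_Icc, Set.mem_Icc] at hjw
      omega
  have hRHS : (∑ᶠ n : ℕ, X ^ (n * (n + 1)) * qb L n) = E1 L := by
    rw [finsum_eq_sum_of_support_subset _ (s := Finset.range (L+1)) ?_]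
    · rfl
    · intro n hn
      simp only [Function.mem_support] at hn
      by_contra hnw
      apply hn
      simp only [Finset.coe_range, Set.mem_Iio] at hnw
      rw [qb_eq_zero_of_lt (by omega), mul_zero]
  have heq := (main_eq L).2
  constructor
  · rw [hLHS, hRHS, heq]
  · intro i
    rw [hLHS, heq]
    unfold E1
    rw [Polynomial.finset_sum_coeff]
    refine Finset.sum_nonneg fun n _ => ?_
    rw [coeff_X_pow_mul']
    split
    · exact qb_coeff_nonneg L n _
    · exact le_rfl
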